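/- Define the Lobachevsky function Λ(x) = -∫₀ˣ ln|2 sin t| dt for x ∈ ℝ. For each integer k ≥ 2, let z(k) = 1 - (1/2)·exp(-iπ/k)·(1 + (1 - 4·exp(iπ/k))^(1/2)), and let α₁(k) = arg z(k), α₂(k) = arg((z(k) - 1)/z(k)), α₃(k) = arg(1/(1 - z(k))). Then the volume V(k) = Λ(α₁(k)) + Λ(α₂(k)) + Λ(α₃(k)) tends to 3·Λ(π/3) as k → ∞. -/

import Mathlib

/-!
As `k → ∞` the radicand `1 - 4e^{iπ/k}` tends to `-3` through the lower half-plane, where the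
principal square root tends to `-i√3`; hence `z(k) → ω = (1 + i√3)/2 = e^{iπ/3}`. Since
`ω² - ω + 1 = 0`, the point `ω` is fixed by both `w ↦ (w - 1)/w` and `w ↦ 1/(1 - w)`, so all three
dihedral angles tend to `arg ω = π/3`. Finally `arg` is continuous off the negative real axis and
`Λ` is continuous, because `log|2 sin t|` has only logarithmic singularities and is therefore
locally integrable.
-/

open Complex Real Filter

/-- The Lobachevsky function `Λ(x) = -∫₀ˣ ln|2 sin t| dt`. -/
noncomputable def lobachevsky (x : ℝ) : ℝ :=
  -∫ t in (0 : ℝ)..x, Real.log |2 * Real.sin t|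

open MeasureTheory Topology

theorem intervalIntegrable_log_abs_two_mul_sin (a b : ℝ) :
    IntervalIntegrable (fun t => Real.log |2 * Real.sin t|) volume a b := by
  simp_rw [Real.log_abs]
  exact (analyticOnNhd_const.mul Real.analyticOnNhd_sin).meromorphicOn.intervalIntegrable_log

theorem continuous_lobachevsky : Continuous lobachevsky :=
  (intervalIntegral.continuous_primitive intervalIntegrable_log_abs_two_mul_sin 0).neg

theorem Complex.cpow_inv_two_eq_of_im_neg {x : ℂ} (hx : x.im < 0) :
    x ^ (2⁻¹ : ℂ) = √((‖x‖ + x.re) / 2) - √((‖x‖ - x.re) / 2) * I :=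
  Complex.ext (by simp [cpow_inv_two_re]) (by simp [cpow_inv_two_im_eq_neg_sqrt hx])

theorem Complex.tendsto_cpow_inv_two_nhdsWithin_im_neg (x : ℂ) :
    Tendsto (· ^ (2⁻¹ : ℂ)) (𝓝[{z : ℂ | z.im < 0}] x)
      (𝓝 (√((‖x‖ + x.re) / 2) - √((‖x‖ - x.re) / 2) * I)) := by
  have hcont : Continuous fun z : ℂ => (√((‖z‖ + z.re) / 2) : ℂ) - √((‖z‖ - z.re) / 2) * I := by
    fun_prop
  refine (hcont.tendsto x).mono_left nhdsWithin_le_nhds |>.congr' ?_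
  filter_upwards [self_mem_nhdsWithin] with z hz
  exact (cpow_inv_two_eq_of_im_neg hz).symm

section QuadraticFixedPoint

variable {K : Type*} [Field K] {w : K}

theorem ne_zero_of_sq_sub_self_add_one_eq_zero (h : w ^ 2 - w + 1 = 0) : w ≠ 0 := by
  rintro rfl
  norm_num at h

theorem one_sub_ne_zero_of_sq_sub_self_add_one_eq_zero (h : w ^ 2 - w + 1 = 0) : 1 - w ≠ 0 := by
  intro h'
  obtain rfl : w = 1 := (sub_eq_zero.1 h').symm
  norm_num at h

theorem sub_one_div_self_of_sq_sub_self_add_one_eq_zero (h : w ^ 2 - w + 1 = 0) :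
    (w - 1) / w = w := by
  rw [div_eq_iff (ne_zero_of_sq_sub_self_add_one_eq_zero h)]
  linear_combination -h

theorem one_div_one_sub_of_sq_sub_self_add_one_eq_zero (h : w ^ 2 - w + 1 = 0) :
    1 / (1 - w) = w := by
  rw [div_eq_iff (one_sub_ne_zero_of_sq_sub_self_add_one_eq_zero h)]
  linear_combination h

end QuadraticFixedPoint

noncomputable def regularShape : ℂ := (1 + √3 * I) / 2

theorem regularShape_sq_sub_self_add_one : regularShape ^ 2 - regularShape + 1 = 0 := by
  have h3 : ((√3 : ℝ) : ℂ) ^ 2 = 3 := by norm_cast; simp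
  rw [regularShape]
  linear_combination (I ^ 2 / 4) * h3 + (3 / 4 : ℂ) * I_sq

theorem arg_regularShape : arg regularShape = π / 3 := by
  have : regularShape = cos ((π / 3 : ℝ) : ℂ) + sin ((π / 3 : ℝ) : ℂ) * I := by
    rw [← ofReal_cos, ← ofReal_sin, Real.cos_pi_div_three, Real.sin_pi_div_three, regularShape]
    push_cast
    ring
  rw [this, arg_cos_add_sin_mul_I ⟨by linarith [pi_pos], by linarith [pi_pos]⟩]

theorem tendsto_one_sub_four_mul_exp_pi_mul_I_div :
    Tendsto (fun k : ℕ => 1 - 4 * exp (π * I / k)) atTop (𝓝[{w : ℂ | w.im < 0}] (-3)) := by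
  refine tendsto_nhdsWithin_iff.2 ⟨?_, ?_⟩
  · have h := (Complex.continuous_exp.tendsto 0).comp
      (tendsto_const_div_atTop_nhds_zero_nat (π * I))
    rw [Complex.exp_zero] at h
    rw [show (-3 : ℂ) = 1 - 4 * 1 by norm_num]
    exact (h.const_mul 4).const_sub 1
  · filter_upwards [eventually_gt_atTop 1] with k hk
    have hk' : (1 : ℝ) < k := by exact_mod_cast hk
    have hθ : (π * I / k : ℂ) = ((π / k : ℝ) : ℂ) * I := by push_cast; ring
    have hsin : 0 < Real.sin (π / k) :=
      Real.sin_pos_of_pos_of_lt_pi (by positivity) (div_lt_self pi_pos hk')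
    have him : (1 - 4 * exp (π * I / k)).im = -(4 * Real.sin (π / k)) := by
      rw [hθ, sub_im, mul_im, exp_ofReal_mul_I_im, exp_ofReal_mul_I_re]
      simp
    rw [him]
    linarith

theorem tendsto_gies3_root (z : ℕ → ℂ)
    (hz : ∀ k : ℕ, 2 ≤ k →
      z k = 1 - (1 / 2) * Complex.exp (-(Real.pi * Complex.I) / (k : ℂ)) *
        (1 + (1 - 4 * Complex.exp (Real.pi * Complex.I / (k : ℂ))) ^ ((1 : ℂ) / 2))) :
    Tendsto z atTop (𝓝 regularShape) := by
  have hsqrt : Tendsto (fun k : ℕ => (1 - 4 * exp (π * I / k)) ^ ((1 : ℂ) / 2)) atTop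
      (𝓝 (-(√3 * I))) := by
    have h := (tendsto_cpow_inv_two_nhdsWithin_im_neg (-3)).comp
      tendsto_one_sub_four_mul_exp_pi_mul_I_div
    norm_num at h
    simpa [one_div, Function.comp_def] using h
  have hexp : Tendsto (fun k : ℕ => exp (-(π * I) / k)) atTop (𝓝 1) := by
    simpa [Function.comp_def] using (Complex.continuous_exp.tendsto 0).comp
      (tendsto_const_div_atTop_nhds_zero_nat (-(π * I)))
  have hlim := ((hexp.const_mul (1 / 2)).mul (hsqrt.const_add 1)).const_sub 1
  rw [show 1 - 1 / 2 * 1 * (1 + -(√3 * I)) = regularShape by rw [regularShape]; ring] at hlim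
  refine hlim.congr' ?_
  filter_upwards [eventually_ge_atTop 2] with k hk
  exact (hz k hk).symm

theorem tendsto_lobachevsky_arg_of_tendsto_regularShape {α : Type*} {l : Filter α} {f : α → ℂ}
    (hf : Tendsto f l (𝓝 regularShape)) :
    Tendsto (fun x => lobachevsky (arg (f x))) l (𝓝 (lobachevsky (π / 3))) := by
  have hslit : regularShape ∈ slitPlane := by
    rw [mem_slitPlane_iff]; left; norm_num [regularShape]
  rw [← arg_regularShape]
  exact (continuous_lobachevsky.tendsto _).comp ((continuousAt_arg hslit).tendsto.comp hf)

/-- Theorem 5.2 (volume claim): the volumes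
`V(k) = Λ(α₁(k)) + Λ(α₂(k)) + Λ(α₃(k))` of the Gies.3 simplices (root series
(4.1)) tend to the volume `3Λ(π/3)` of the regular ideal simplex as `k → ∞`. -/
theorem gies3_volume_tendsto_gieseking (z : ℕ → ℂ)
    (hz : ∀ k : ℕ, 2 ≤ k →
      z k = 1 - (1 / 2) * Complex.exp (-(Real.pi * Complex.I) / (k : ℂ)) *
        (1 + (1 - 4 * Complex.exp (Real.pi * Complex.I / (k : ℂ))) ^ ((1 : ℂ) / 2))) :
    Tendsto (fun k : ℕ =>
        lobachevsky (Complex.arg (z k)) +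
        lobachevsky (Complex.arg ((z k - 1) / z k)) +
        lobachevsky (Complex.arg (1 / (1 - z k))))
      atTop (nhds (3 * lobachevsky (Real.pi / 3))) := by
  have hω := regularShape_sq_sub_self_add_one
  have h₁ := tendsto_gies3_root z hz
  have h₂ : Tendsto (fun k => (z k - 1) / z k) atTop (𝓝 regularShape) := by
    have h := (h₁.sub_const 1).div h₁ (ne_zero_of_sq_sub_self_add_one_eq_zero hω)
    rwa [sub_one_div_self_of_sq_sub_self_add_one_eq_zero hω] at h
  have h₃ : Tendsto (fun k => 1 / (1 - z k)) atTop (𝓝 regularShape) := by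
    have h := (tendsto_const_nhds (x := (1 : ℂ))).div (h₁.const_sub 1)
      (one_sub_ne_zero_of_sq_sub_self_add_one_eq_zero hω)
    rwa [one_div_one_sub_of_sq_sub_self_add_one_eq_zero hω] at h
  rw [show 3 * lobachevsky (π / 3) = lobachevsky (π / 3) + lobachevsky (π / 3) +
    lobachevsky (π / 3) by ring]
  exact ((tendsto_lobachevsky_arg_of_tendsto_regularShape h₁).add
    (tendsto_lobachevsky_arg_of_tendsto_regularShape h₂)).add
    (tendsto_lobachevsky_arg_of_tendsto_regularShape h₃)
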